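/- Let H₁ and H₂ be closed subgroups of SO(n) such that both SO(n)/H₁ and SO(n)/H₂ are Riemannian symmetric spaces, and let L²(SO(n)/H₁) = ⊕_λ Γ^{(1)}_λ and L²(SO(n)/H₂) = ⊕_ξ Γ^{(2)}_ξ be the decompositions into irreducible SO(n) subrepresentations (indexed by highest weight). If f ∈ Γ^{(1)}_λ is H₂ invariant and Γ^{(1)}_λ is a real representation, then f̂ ∈ Γ^{(2)}_λ and f̂ is H₁ invariant. -/

import Mathlib

open MeasureTheory Set Matrix
open scoped RealInnerProductSpace ENNReal NNReal

noncomputable section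

namespace MinkVal

/-! ### Euclidean space, sphere, convex bodies -/

/-- Euclidean `n`-space. -/
abbrev En (n : ℕ) := EuclideanSpace ℝ (Fin n)

/-- The unit sphere `S^{n-1}` in `ℝⁿ`. -/
def sph (n : ℕ) : Set (En n) := Metric.sphere 0 1

/-- The base point `ē ∈ S^{n-1}` (the last coordinate unit vector). -/
def ebar (n : ℕ) : En n :=
  if h : 0 < n then EuclideanSpace.single (⟨n - 1, by omega⟩ : Fin n) (1 : ℝ) else 0

/-- The first coordinate unit vector (orthogonal to `ebar` when `n ≥ 2`). -/
def e0 (n : ℕ) : En n :=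
  if h : 0 < n then EuclideanSpace.single (⟨0, h⟩ : Fin n) (1 : ℝ) else 0

/-- The point `t·ē + √(1-t²)·e₀` on the sphere at "latitude" `t` (used to evaluate a zonal
function with profile known on `[-1,1]`). -/
def pointAt (n : ℕ) (t : ℝ) : En n := t • ebar n + Real.sqrt (1 - t ^ 2) • e0 n

/-- The support function `h(K, u)` of a convex body. -/
def suppFn {n : ℕ} (K : ConvexBody (En n)) (u : En n) : ℝ :=
  sSup ((fun x => ⟪u, x⟫) '' (K : Set (En n)))

/-- The volume `κ_x` of the `x`-dimensional Euclidean unit ball, defined via the Gamma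
function (which makes sense for any real index `x`). -/
def kappa (x : ℝ) : ℝ := Real.pi ^ (x / 2) / Real.Gamma (x / 2 + 1)

/-- The continuous linear map on `ℝⁿ` induced by a matrix. -/
def mact {n : ℕ} (A : Matrix (Fin n) (Fin n) ℝ) : En n →L[ℝ] En n :=
  LinearMap.toContinuousLinearMap (Matrix.toEuclideanLin A)

/-- The image of a convex body under a continuous linear map. -/
def cbMapL {n : ℕ} (T : En n →L[ℝ] En n) (K : ConvexBody (En n)) : ConvexBody (En n) :=
  ⟨T '' (K : Set (En n)), K.convex.linear_image (T : En n →ₗ[ℝ] En n),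
    K.isCompact.image T.continuous, K.nonempty.image _⟩

/-- The image of a convex body under (the linear action of) a matrix. -/
def cbMap {n : ℕ} (A : Matrix (Fin n) (Fin n) ℝ) (K : ConvexBody (En n)) : ConvexBody (En n) :=
  cbMapL (mact A) K

/-- The translate `x + K` of a convex body. -/
def cbTranslate {n : ℕ} (K : ConvexBody (En n)) (x : En n) : ConvexBody (En n) :=
  ⟨(fun y => x + y) '' (K : Set (En n)), K.convex.translate x,
    K.isCompact.image (continuous_const.add continuous_id), K.nonempty.image _⟩

/-- The reflection `-K` of a convex body. -/
def cbNeg {n : ℕ} (K : ConvexBody (En n)) : ConvexBody (En n) := (-1 : ℝ) • K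

/-- The closed ball of radius `r` (the origin if `r ≤ 0`), as a convex body. -/
def ballBody (n : ℕ) (r : ℝ) : ConvexBody (En n) :=
  ⟨Metric.closedBall 0 (max r 0), convex_closedBall _ _, isCompact_closedBall _ _,
    Metric.nonempty_closedBall.2 (le_max_right _ _)⟩

/-! ### Valuation properties -/

/-- `Φ` is a valuation: `Φ K + Φ L = Φ (K ∪ L) + Φ (K ∩ L)` whenever `K ∪ L` is convex
(`U` and `I` denote the union and the intersection, as convex bodies). -/
def IsMinkVal {n : ℕ} (Φ : ConvexBody (En n) → ConvexBody (En n)) : Prop :=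
  ∀ K L U I : ConvexBody (En n), (U : Set (En n)) = ↑K ∪ ↑L → (I : Set (En n)) = ↑K ∩ ↑L →
    Φ K + Φ L = Φ U + Φ I

/-- Translation invariance of a Minkowski valuation. -/
def TransInv {n : ℕ} (Φ : ConvexBody (En n) → ConvexBody (En n)) : Prop :=
  ∀ K x, Φ (cbTranslate K x) = Φ K

/-- The set of orthogonal `n × n` matrices, i.e. `O(n)`. -/
def oMat (n : ℕ) : Set (Matrix (Fin n) (Fin n) ℝ) := {A | Aᵀ * A = 1}

/-- The set of special orthogonal (rotation) matrices, i.e. `SO(n)`. -/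
def soMat (n : ℕ) : Set (Matrix (Fin n) (Fin n) ℝ) := {A | Aᵀ * A = 1 ∧ A.det = 1}

/-- `SO(n)`-equivariance of a Minkowski valuation. -/
def SOEquiv {n : ℕ} (Φ : ConvexBody (En n) → ConvexBody (En n)) : Prop :=
  ∀ A ∈ soMat n, ∀ K, Φ (cbMap A K) = cbMap A (Φ K)

/-- Evenness of a Minkowski valuation. -/
def IsEvenMV {n : ℕ} (Φ : ConvexBody (En n) → ConvexBody (En n)) : Prop :=
  ∀ K, Φ (cbNeg K) = Φ K

/-- `Φ` is (positively) homogeneous of degree `i`. -/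
def HasDegree {n : ℕ} (i : ℕ) (Φ : ConvexBody (En n) → ConvexBody (En n)) : Prop :=
  ∀ c : ℝ, 0 < c → ∀ K, Φ (c • K) = c ^ i • Φ K

/-! ### The rotation group `SO(n)` and its Haar measure -/

/-- The rotation group `SO(n)`, realized as a subgroup of the units of the matrix ring. -/
def SOn (n : ℕ) : Subgroup (Matrix (Fin n) (Fin n) ℝ)ˣ where
  carrier := {A | (A : Matrix (Fin n) (Fin n) ℝ)ᵀ * (A : Matrix (Fin n) (Fin n) ℝ) = 1 ∧
    (A : Matrix (Fin n) (Fin n) ℝ).det = 1}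
  one_mem' := by simp
  mul_mem' := by
    rintro a b ⟨ha1, ha2⟩ ⟨hb1, hb2⟩
    refine ⟨?_, ?_⟩
    · rw [Units.val_mul, Matrix.transpose_mul, mul_assoc,
        ← mul_assoc ((a : Matrix (Fin n) (Fin n) ℝ))ᵀ, ha1, one_mul, hb1]
    · rw [Units.val_mul, Matrix.det_mul, ha2, hb2, mul_one]
  inv_mem' := by
    rintro a ⟨ha1, ha2⟩
    have h1 : (a : Matrix (Fin n) (Fin n) ℝ) *
        ((a⁻¹ : (Matrix (Fin n) (Fin n) ℝ)ˣ) : Matrix (Fin n) (Fin n) ℝ) = 1 := by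
      rw [← Units.val_mul, mul_inv_cancel, Units.val_one]
    have hinv : ((a⁻¹ : (Matrix (Fin n) (Fin n) ℝ)ˣ) : Matrix (Fin n) (Fin n) ℝ)
        = (a : Matrix (Fin n) (Fin n) ℝ)ᵀ := by
      calc ((a⁻¹ : (Matrix (Fin n) (Fin n) ℝ)ˣ) : Matrix (Fin n) (Fin n) ℝ)
          = 1 * ((a⁻¹ : (Matrix (Fin n) (Fin n) ℝ)ˣ) : Matrix (Fin n) (Fin n) ℝ) :=
            (one_mul _).symm
        _ = (a : Matrix (Fin n) (Fin n) ℝ)ᵀ * (a : Matrix (Fin n) (Fin n) ℝ) *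
            ((a⁻¹ : (Matrix (Fin n) (Fin n) ℝ)ˣ) : Matrix (Fin n) (Fin n) ℝ) := by rw [ha1]
        _ = (a : Matrix (Fin n) (Fin n) ℝ)ᵀ := by rw [mul_assoc, h1, mul_one]
    refine ⟨?_, ?_⟩
    · rw [hinv, Matrix.transpose_transpose]
      exact mul_eq_one_comm.mp ha1
    · rw [hinv, Matrix.det_transpose, ha2]

/-- The group `SO(n)`, as a type. -/
abbrev G (n : ℕ) := ↥(SOn n)

/-- The matrix of an element of `SO(n)`. -/
def mat {n : ℕ} (θ : G n) : Matrix (Fin n) (Fin n) ℝ :=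
  ((θ : (Matrix (Fin n) (Fin n) ℝ)ˣ) : Matrix (Fin n) (Fin n) ℝ)

/-- The action of a rotation on `ℝⁿ`. -/
def rv {n : ℕ} (θ : G n) (x : En n) : En n := mact (mat θ) x

instance (n : ℕ) : MeasurableSpace (G n) := borel _
instance (n : ℕ) : BorelSpace (G n) := ⟨rfl⟩

theorem isCompact_soSet (n : ℕ) :
    IsCompact {A : Matrix (Fin n) (Fin n) ℝ | Aᵀ * A = 1 ∧ A.det = 1} := by
  have hQ : IsCompact {A : Matrix (Fin n) (Fin n) ℝ | ∀ i j, A i j ∈ Icc (-1 : ℝ) 1} := by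
    have h := isCompact_univ_pi (ι := Fin n)
      (fun _ => isCompact_univ_pi (ι := Fin n) fun _ => isCompact_Icc (a := (-1 : ℝ)) (b := 1))
    have hset : {A : Matrix (Fin n) (Fin n) ℝ | ∀ i j, A i j ∈ Icc (-1 : ℝ) 1} =
        (univ.pi fun _ : Fin n => univ.pi fun _ : Fin n => Icc (-1 : ℝ) 1) := by
      ext A
      constructor
      · intro hA
        intro i _
        intro j _
        exact hA i j
      · intro hA i j
        exact hA i (mem_univ i) j (mem_univ j)
    rw [hset]; exact h
  refine hQ.of_isClosed_subset ?_ ?_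
  · exact (isClosed_eq ((continuous_id.matrix_transpose).matrix_mul continuous_id)
      continuous_const).inter (isClosed_eq (continuous_id.matrix_det) continuous_const)
  · rintro A ⟨h1, _⟩ i j
    have hd : (Aᵀ * A) j j = 1 := by rw [h1]; simp [Matrix.one_apply_eq]
    rw [Matrix.mul_apply] at hd
    have hsum : ∑ k, A k j ^ 2 = 1 := by
      rw [← hd]; congr 1; ext k; simp [Matrix.transpose_apply, sq]
    have hle : A i j ^ 2 ≤ 1 := by
      rw [← hsum]
      exact Finset.single_le_sum (f := fun k => A k j ^ 2) (fun k _ => sq_nonneg _)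
        (Finset.mem_univ i)
    exact abs_le.mp ((sq_le_one_iff_abs_le_one (A i j)).mp hle)

/-- `SO(n)` is compact. -/
instance (n : ℕ) : CompactSpace (G n) := by
  set S := {A : Matrix (Fin n) (Fin n) ℝ | Aᵀ * A = 1 ∧ A.det = 1} with hS
  haveI : CompactSpace S := isCompact_iff_compactSpace.mp (isCompact_soSet n)
  let φ : S → G n := fun A =>
    ⟨⟨A.1, A.1ᵀ, by rw [mul_eq_one_comm] at *; exact A.2.1, A.2.1⟩, ⟨A.2.1, A.2.2⟩⟩
  have hφ : Continuous φ := by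
    refine Continuous.subtype_mk ?_ _
    rw [Units.continuous_iff]
    exact ⟨continuous_subtype_val, continuous_subtype_val.matrix_transpose⟩
  constructor
  have hsub : (univ : Set (G n)) ⊆ range φ := by
    rintro θ -
    refine ⟨⟨(θ : (Matrix (Fin n) (Fin n) ℝ)ˣ), θ.2.1, θ.2.2⟩, ?_⟩
    apply Subtype.ext
    apply Units.ext
    rfl
  exact IsCompact.of_isClosed_subset (isCompact_range hφ) isClosed_univ (by simpa using hsub)

/-- The Haar probability measure on `SO(n)`. -/
def haarG (n : ℕ) : Measure (G n) :=
  Measure.haarMeasure (⊤ : TopologicalSpace.PositiveCompacts (G n))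

instance (n : ℕ) : IsProbabilityMeasure (haarG n) := by
  constructor
  have h : (univ : Set (G n)) = ((⊤ : TopologicalSpace.PositiveCompacts (G n)) : Set (G n)) :=
    (TopologicalSpace.PositiveCompacts.coe_top).symm
  rw [haarG, h]
  exact Measure.haarMeasure_self

/-- The Haar probability measure of a compact subgroup `H ≤ SO(n)`, viewed as a measure on
`SO(n)` (junk value `0` if `H` is not compact, which does not occur below). -/
def subHaar {n : ℕ} (H : Subgroup (G n)) : Measure (G n) := by
  classical
  exact if h : IsCompact (H : Set (G n)) then
    haveI : CompactSpace H := isCompact_iff_compactSpace.mp h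
    haveI : BorelSpace H := Subtype.borelSpace (H : Set (G n))
    Measure.map (Subgroup.subtype H)
      (Measure.haarMeasure (⊤ : TopologicalSpace.PositiveCompacts H))
  else 0

theorem mact_mul {n : ℕ} (A B : Matrix (Fin n) (Fin n) ℝ) (x : En n) :
    mact (A * B) x = mact A (mact B x) := by
  simp only [mact, LinearMap.coe_toContinuousLinearMap']
  apply (WithLp.equiv 2 _).injective
  show Matrix.toLin' (A * B) (WithLp.ofLp x) = Matrix.toLin' A (Matrix.toLin' B (WithLp.ofLp x))
  simp only [Matrix.toLin'_mul, LinearMap.comp_apply]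

theorem mact_one {n : ℕ} (x : En n) : mact (1 : Matrix (Fin n) (Fin n) ℝ) x = x := by
  simp only [mact, LinearMap.coe_toContinuousLinearMap']
  apply (WithLp.equiv 2 _).injective
  show Matrix.toLin' 1 (WithLp.ofLp x) = WithLp.ofLp x
  simp only [Matrix.toLin'_one, LinearMap.id_apply]

theorem rv_mul {n : ℕ} (θ η : G n) (x : En n) : rv (θ * η) x = rv θ (rv η x) := by
  simp only [rv, mat]
  rw [← mact_mul]
  rfl

theorem rv_one {n : ℕ} (x : En n) : rv (1 : G n) x = x := mact_one x

/-! ### Distinguished subgroups of `SO(n)` -/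

/-- The subgroup of `SO(n)` fixing the base point `ē`; this is a copy of `SO(n-1)`, the
stabilizer occurring in the identification `S^{n-1} = SO(n)/SO(n-1)`. -/
def stab (n : ℕ) : Subgroup (G n) where
  carrier := {θ | rv θ (ebar n) = ebar n}
  one_mem' := rv_one _
  mul_mem' := by
    intro a b ha hb
    simp only [Set.mem_setOf_eq] at *
    rw [rv_mul, hb, ha]
  inv_mem' := by
    intro a ha
    simp only [Set.mem_setOf_eq] at *
    conv_lhs => rw [← ha]
    rw [← rv_mul, inv_mul_cancel, rv_one]

/-- The coordinate subspace `Ē_i = span(e_0, …, e_{i-1})`, as a set; it is the base point of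
the identification `Gr_{i,n} = SO(n)/S(O(i)×O(n-i))`. -/
def eiSet (n i : ℕ) : Set (En n) := {x | ∀ j : Fin n, i ≤ (j : ℕ) → x j = 0}

/-- The subgroup of rotations preserving the subspace `Ē_i`; this is a copy of
`S(O(i) × O(n-i))`. -/
def blockSub (n i : ℕ) : Subgroup (G n) where
  carrier := {θ | rv θ '' eiSet n i = eiSet n i}
  one_mem' := by
    simp only [Set.mem_setOf_eq]
    have h : rv (1 : G n) '' eiSet n i = id '' eiSet n i :=
      Set.image_congr fun x _ => by rw [rv_one]; rfl
    rw [h, Set.image_id]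
  mul_mem' := by
    intro a b ha hb
    simp only [Set.mem_setOf_eq] at *
    have h : rv (a * b) '' eiSet n i = rv a '' (rv b '' eiSet n i) := by
      rw [← Set.image_comp]
      exact Set.image_congr fun x _ => rv_mul a b x
    rw [h, hb, ha]
  inv_mem' := by
    intro a ha
    simp only [Set.mem_setOf_eq] at *
    conv_lhs => rw [← ha]
    rw [← Set.image_comp]
    have h : (fun x => rv a⁻¹ (rv a x)) '' eiSet n i = id '' eiSet n i :=
      Set.image_congr fun x _ => by
        show rv a⁻¹ (rv a x) = x
        rw [← rv_mul, inv_mul_cancel, rv_one]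
    rw [show (rv a⁻¹ ∘ rv a) = fun x => rv a⁻¹ (rv a x) from rfl, h, Set.image_id]

/-! ### Projection volumes, area measures, cosine of angles -/

/-- The coordinate subspace `Ē_i`, as a submodule. -/
def eiSub (n i : ℕ) : Submodule ℝ (En n) where
  carrier := eiSet n i
  zero_mem' := by intro j _; simp [eiSet]
  add_mem' := by
    intro x y hx hy j hj
    simp only [PiLp.add_apply]
    rw [hx j hj, hy j hj, add_zero]
  smul_mem' := by
    intro c x hx j hj
    simp only [PiLp.smul_apply]
    rw [hx j hj, smul_zero]

/-- Orthogonal projection onto a (finite-dimensional, hence complete) subspace of `ℝⁿ`,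
as a map `ℝⁿ → ℝⁿ`. -/
def projE {n : ℕ} (S : Submodule ℝ (En n)) (x : En n) : En n :=
  (S.orthogonalProjectionOnto x : En n)

/-- The rotated coordinate subspace `θ·Ē_i`; as `θ` runs through `SO(n)` these realize all
`i`-dimensional subspaces, i.e. all points of the Grassmannian `Gr_{i,n}`. -/
def rotSub {n : ℕ} (θ : G n) (i : ℕ) : Submodule ℝ (En n) :=
  (eiSub n i).map (Matrix.toEuclideanLin (mat θ))

/-- The `i`-dimensional volume `vol_i(K | θ·Ē_i)` of the orthogonal projection of `K` onto
the subspace `θ·Ē_i` (computed by the `i`-dimensional Hausdorff measure).  As a function of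
`θ ∈ SO(n)` this is the `i`-th projection function of `K`, viewed as a right
`S(O(i)×O(n-i))`-invariant function on `SO(n)`, i.e. as a function on `Gr_{i,n}`. -/
def projVol {n : ℕ} (i : ℕ) (K : ConvexBody (En n)) (θ : G n) : ℝ :=
  (μH[(i : ℝ)] (projE (rotSub θ i) '' (K : Set (En n)))).toReal

/-- The unit cube in the coordinate subspace `Ē_i`, as a set. -/
def cubeSet (n i : ℕ) : Set (En n) :=
  {x | ∀ j : Fin n, ((j : ℕ) < i → x j ∈ Icc (0 : ℝ) 1) ∧ (i ≤ (j : ℕ) → x j = 0)}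

theorem cubeSet_eq_pi (n i : ℕ) : cubeSet n i =
    (WithLp.ofLp ⁻¹' (univ.pi fun j : Fin n =>
      if (j : ℕ) < i then Icc (0 : ℝ) 1 else {0}) : Set (En n)) := by
  ext x
  constructor
  · intro hx j _
    by_cases hj : (j : ℕ) < i
    · simp only [hj, if_true]
      exact (hx j).1 hj
    · simp only [hj, if_false]
      exact (hx j).2 (not_lt.mp hj)
  · intro hx j
    have h := hx j (mem_univ j)
    constructor
    · intro hj
      simpa only [hj, if_true] using h
    · intro hj
      simpa only [Nat.not_lt.mpr hj, if_false, Set.mem_singleton_iff] using h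

theorem convex_cubeSet (n i : ℕ) : Convex ℝ (cubeSet n i) := by
  rw [cubeSet_eq_pi]
  exact (convex_pi fun j _ => by
    by_cases hj : (j : ℕ) < i
    · simp only [hj, if_true]; exact convex_Icc 0 1
    · simp only [hj, if_false]; exact convex_singleton 0).linear_preimage
      (WithLp.linearEquiv 2 ℝ (Fin n → ℝ)).toLinearMap

theorem isCompact_cubeSet (n i : ℕ) : IsCompact (cubeSet n i) := by
  rw [cubeSet_eq_pi]
  exact (PiLp.continuousLinearEquiv 2 ℝ (fun _ : Fin n => ℝ)).toHomeomorph.isCompact_preimage.mpr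
    (isCompact_univ_pi fun j => by
    by_cases hj : (j : ℕ) < i
    · simp only [hj, if_true]; exact isCompact_Icc
    · simp only [hj, if_false]; exact isCompact_singleton)

theorem nonempty_cubeSet (n i : ℕ) : (cubeSet n i).Nonempty := by
  refine ⟨0, fun j => ⟨fun _ => ?_, fun _ => ?_⟩⟩
  · constructor <;> simp
  · simp

/-- The unit cube in `Ē_i`, as a convex body (it has `i`-dimensional volume one). -/
def cubeBody (n i : ℕ) : ConvexBody (En n) :=
  ⟨cubeSet n i, convex_cubeSet n i, isCompact_cubeSet n i, nonempty_cubeSet n i⟩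

/-- The cosine of the angle between the subspaces `η·Ē_i` and `θ·Ē_i`:
`|cos(E, F)| = vol_i(Q|E)` for any subset `Q ⊆ F` of `i`-dimensional volume one (here the
rotated unit cube). -/
def cosAng {n : ℕ} (i : ℕ) (η θ : G n) : ℝ :=
  (μH[(i : ℝ)] (projE (rotSub η i) '' (rv θ '' cubeSet n i))).toReal

/-- The nearest-point projection onto a convex body. -/
def nearestPt {n : ℕ} (K : ConvexBody (En n)) (x : En n) : En n := by
  classical
  exact if h : ∃ y ∈ (K : Set (En n)), Metric.infDist x (K : Set (En n)) = dist x y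
    then h.choose else 0

/-- The "local parallel set" measure of `K` at distance `ε`: the push-forward to the unit
sphere (by the direction of the nearest-point map) of Lebesgue measure on the set of points
within distance `ε` of `K`.  By the local Steiner formula,
`parM K ε = (1/n) ∑_{j<n} ε^{n-j} (n choose j) S_j(K, ·)`, where `S_j(K,·)` are the area
measures of `K`. -/
def parM {n : ℕ} (K : ConvexBody (En n)) (ε : ℝ) : Measure (En n) :=
  Measure.map (fun x => ‖x - nearestPt K x‖⁻¹ • (x - nearestPt K x))
    (volume.restrict {x | x ∉ (K : Set (En n)) ∧ Metric.infDist x (K : Set (En n)) ≤ ε})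

/-- The inverse of the Vandermonde matrix `(m+1)^(n-j)`, used to solve the Steiner-type
linear system expressing the local parallel set measures in terms of the area measures. -/
def vanInv (n : ℕ) : Matrix (Fin n) (Fin n) ℝ :=
  (Matrix.of fun m j : Fin n => ((m : ℝ) + 1) ^ (n - (j : ℕ)))⁻¹

/-- The integral `∫_{S^{n-1}} f(v) dS_i(K, v)` of `f` against the area measure of order `i`
of the convex body `K`: the area measures are obtained from the local parallel set measures
`parM K ε`, `ε = 1, …, n`, by solving the Steiner-type linear system. -/
def areaInt {n : ℕ} (i : ℕ) (K : ConvexBody (En n)) (f : En n → ℝ) : ℝ := by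
  classical
  exact if hi : i < n then
    (n : ℝ) * ((n.choose i : ℝ))⁻¹ *
      ∑ m : Fin n, vanInv n ⟨i, hi⟩ m * ∫ u, f u ∂(parM K ((m : ℝ) + 1))
  else 0

/-! ### Signed measures on `SO(n)`; measures on the sphere at the group level -/

/-- The integral of a (say, bounded Borel) function against a finite signed measure, via the
Jordan decomposition. -/
def sInt {α : Type*} [MeasurableSpace α] (μ : SignedMeasure α) (f : α → ℝ) : ℝ :=
  (∫ x, f x ∂μ.toJordanDecomposition.posPart) - ∫ x, f x ∂μ.toJordanDecomposition.negPart

/-- The reflection `μ̂` of a signed measure on `SO(n)`: the image of `μ` under `θ ↦ θ⁻¹`. -/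
def hatSM {n : ℕ} (μ : SignedMeasure (G n)) : SignedMeasure (G n) :=
  VectorMeasure.map μ fun θ => θ⁻¹

/-- Right invariance of a signed measure on `SO(n)` under the stabilizer of `ē`; signed
measures with this property are exactly the (finite signed Borel) measures on the sphere
`S^{n-1} = SO(n)/SO(n-1)`. -/
def RightStabInv {n : ℕ} (μ : SignedMeasure (G n)) : Prop :=
  ∀ h ∈ stab n, VectorMeasure.map μ (fun θ => θ * h) = μ

/-- The diagonal orthogonal matrix flipping the first coordinate (determinant `-1`; it fixes
the base point `ē` when `n ≥ 2`). -/
def flip0 (n : ℕ) : Matrix (Fin n) (Fin n) ℝ :=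
  Matrix.diagonal fun j : Fin n => if (j : ℕ) = 0 then (-1 : ℝ) else 1

theorem flip0_mem_oMat (n : ℕ) : (flip0 n)ᵀ * flip0 n = 1 := by
  rw [flip0, Matrix.diagonal_transpose, Matrix.diagonal_mul_diagonal]
  have h : (fun i : Fin n => (if (i : ℕ) = 0 then (-1 : ℝ) else 1) *
      if (i : ℕ) = 0 then (-1 : ℝ) else 1) = fun _ => (1 : ℝ) := by
    funext j
    by_cases hj : (j : ℕ) = 0 <;> simp [hj]
  rw [h, Matrix.diagonal_one]

theorem det_flip0 (n : ℕ) (hn : 0 < n) : (flip0 n).det = -1 := by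
  rw [flip0, Matrix.det_diagonal]
  rw [Finset.prod_eq_single (⟨0, hn⟩ : Fin n)]
  · simp
  · intro j _ hj
    have : (j : ℕ) ≠ 0 := by
      intro h0
      exact hj (Fin.ext h0)
    simp [this]
  · intro h
    exact absurd (Finset.mem_univ _) h

theorem matSO_orth {n : ℕ} (θ : G n) : (mat θ)ᵀ * mat θ = 1 := θ.2.1

theorem matSO_det {n : ℕ} (θ : G n) : (mat θ).det = 1 := θ.2.2

/-- Build an element of `SO(n)` from an orthogonal matrix of determinant one. -/
def mkSO {n : ℕ} (A : Matrix (Fin n) (Fin n) ℝ) (h1 : Aᵀ * A = 1) (h2 : A.det = 1) : G n :=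
  ⟨⟨A, Aᵀ, mul_eq_one_comm.mp h1, h1⟩, ⟨h1, h2⟩⟩

/-- For `g ∈ O(n)`, the self-map of `SO(n)` implementing the left action of `g` on the
sphere `S^{n-1} = SO(n)/SO(n-1)`: `θ ↦ g θ` if `det g = 1`, and `θ ↦ g θ k₀` with the fixed
improper stabilizer element `k₀ = flip0 n` otherwise (in both cases the result lies in
`SO(n)` and maps `ē` to `g·(θ ē)`).  Junk value `θ` if `g` is not orthogonal. -/
def tauApp {n : ℕ} (g : Matrix (Fin n) (Fin n) ℝ) (θ : G n) : G n := by
  classical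
  exact if hg : gᵀ * g = 1 then
    (if hd : g.det = 1 then
      mkSO (g * mat θ)
        (by rw [Matrix.transpose_mul, mul_assoc, ← mul_assoc gᵀ, hg, one_mul, matSO_orth])
        (by rw [Matrix.det_mul, hd, matSO_det, mul_one])
    else
      mkSO (g * mat θ * flip0 n)
        (by
          rw [Matrix.transpose_mul, Matrix.transpose_mul, mul_assoc]
          rw [show (mat θ)ᵀ * gᵀ * (g * mat θ * flip0 n)
              = (mat θ)ᵀ * (gᵀ * g) * mat θ * flip0 n by
            simp only [mul_assoc]]
          rw [hg, mul_one, matSO_orth, one_mul, flip0_mem_oMat])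
        (by
          rcases Nat.eq_zero_or_pos n with h0 | hn
          · exfalso
            apply hd
            subst h0
            have : g = 1 := Subsingleton.elim g 1
            rw [this, Matrix.det_one]
          · have hsq : g.det * g.det = 1 := by
              have h := congrArg Matrix.det hg
              rwa [Matrix.det_mul, Matrix.det_transpose, Matrix.det_one] at h
            rcases mul_self_eq_one_iff.mp hsq with h1 | h1
            · exact absurd h1 hd
            · rw [Matrix.det_mul, Matrix.det_mul, h1, matSO_det, det_flip0 n hn]
              norm_num))
  else θ

/-- Invariance of a signed measure on the sphere (i.e. a right-`SO(n-1)`-invariant signed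
measure on `SO(n)`) under the subgroup `O(i) × O(n-i)` of `O(n)` (all orthogonal maps
preserving the subspace `Ē_i`), acting via `tauApp`. -/
def OBlockInvSM {n : ℕ} (i : ℕ) (μ : SignedMeasure (G n)) : Prop :=
  ∀ g : Matrix (Fin n) (Fin n) ℝ, gᵀ * g = 1 → mact g '' eiSet n i = eiSet n i →
    VectorMeasure.map μ (tauApp g) = μ

/-- Invariance of a signed measure on the sphere under `S(O(i) × O(n-i))` (rotations
preserving the subspace `Ē_i`), acting by left translation. -/
def SBlockInvSM {n : ℕ} (i : ℕ) (μ : SignedMeasure (G n)) : Prop :=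
  ∀ ϑ ∈ blockSub n i, VectorMeasure.map μ (fun θ => ϑ * θ) = μ

/-- `μ` is a spherical Crofton measure for the Minkowski valuation `Φ` (of degree `i`):
`μ` is an `O(i)×O(n-i)` invariant signed measure on `S^{n-1}` and
`h(ΦK, ·) = vol_i(K|·) ∗ μ`, where the convolution is induced from `SO(n)` via the
identifications `S^{n-1} = SO(n)/SO(n-1)`, `Gr_{i,n} = SO(n)/S(O(i)×O(n-i))`, that is,
`h(ΦK, η·ē) = ∫_{SO(n)} vol_i(K | η θ⁻¹ Ē_i) dμ(θ)`. -/
def IsSphCrofton {n : ℕ} (i : ℕ) (Φ : ConvexBody (En n) → ConvexBody (En n))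
    (μ : SignedMeasure (G n)) : Prop :=
  RightStabInv μ ∧ OBlockInvSM i μ ∧
    ∀ K (η : G n), suppFn (Φ K) (rv η (ebar n)) = sInt μ fun θ => projVol i K (η * θ⁻¹)

/-! ### Klain functions and Klain bodies -/

/-- The Klain function of a translation invariant even valuation `φ` of degree `i`, as a
function on `SO(n)` (i.e. on `Gr_{i,n}`): by Hadwiger's theorem the restriction of `φ` to
bodies in the subspace `θ·Ē_i` is a multiple of `vol_i`, and the value at the unit cube in
`θ·Ē_i` is exactly this multiple. -/
def klainFn {n : ℕ} (i : ℕ) (φ : ConvexBody (En n) → ℝ) (θ : G n) : ℝ :=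
  φ (cbMap (mat θ) (cubeBody n i))

/-- The real valued valuation associated with an `SO(n)` equivariant Minkowski valuation:
`φ(K) = h(ΦK, ē)`. -/
def assocVal {n : ℕ} (Φ : ConvexBody (En n) → ConvexBody (En n)) :
    ConvexBody (En n) → ℝ :=
  fun K => suppFn (Φ K) (ebar n)

/-- A convex body `M` is invariant under `O(i)×O(n-i)` (the orthogonal maps preserving the
subspace `Ē_i`). -/
def OBlockInvBody {n : ℕ} (i : ℕ) (M : ConvexBody (En n)) : Prop :=
  ∀ g : Matrix (Fin n) (Fin n) ℝ, gᵀ * g = 1 → mact g '' eiSet n i = eiSet n i →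
    cbMap g M = M

/-- `M` is the Klain body of the (even, `SO(n)` equivariant, degree `i`) Minkowski
valuation `Φ`: `M` is `O(i)×O(n-i)` invariant and `(Kl_i φ)^ = h(M, ·)` on the sphere,
where `φ` is the associated real valued valuation of `Φ`. -/
def IsKlainBody {n : ℕ} (i : ℕ) (Φ : ConvexBody (En n) → ConvexBody (En n))
    (M : ConvexBody (En n)) : Prop :=
  OBlockInvBody i M ∧
    ∀ η : G n, klainFn i (assocVal Φ) η⁻¹ = suppFn M (rv η (ebar n))

/-! ### Functions on the sphere -/

/-- A function is smooth on the sphere `S^{n-1}` if it agrees there with a globally smooth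
function. -/
def SmoothSph {n : ℕ} (f : En n → ℝ) : Prop :=
  ∃ F : En n → ℝ, ContDiff ℝ (⊤ : ℕ∞) F ∧ EqOn f F (sph n)

/-- A function on the sphere is zonal if it is invariant under all rotations fixing `ē`. -/
def Zonal {n : ℕ} (f : En n → ℝ) : Prop :=
  ∀ θ ∈ stab n, ∀ u ∈ sph n, f (rv θ u) = f u

/-- Evenness of a function on the sphere. -/
def EvenFn {n : ℕ} (f : En n → ℝ) : Prop := ∀ u ∈ sph n, f (-u) = f u

/-- A function on the sphere is invariant under `S(O(i)×O(n-i))`. -/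
def SBlockInvFn {n : ℕ} (i : ℕ) (f : En n → ℝ) : Prop :=
  ∀ ϑ ∈ blockSub n i, ∀ u ∈ sph n, f (rv ϑ u) = f u

/-- A function on the sphere is invariant under the full group `O(i)×O(n-i)`. -/
def OBlockInvFn {n : ℕ} (i : ℕ) (f : En n → ℝ) : Prop :=
  ∀ g : Matrix (Fin n) (Fin n) ℝ, gᵀ * g = 1 → mact g '' eiSet n i = eiSet n i →
    ∀ u ∈ sph n, f (mact g u) = f u

/-- Orthogonality (in `L²(S^{n-1})`) to the restrictions of all linear functions; membership
in `C_o(S^{n-1})`. -/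
def OrthLin {n : ℕ} (f : En n → ℝ) : Prop :=
  ∀ x : En n, (∫ θ, f (rv θ (ebar n)) * ⟪x, rv θ (ebar n)⟫ ∂haarG n) = 0

/-! ### Transforms and convolutions -/

/-- The Radon-type average over the subgroup `S(O(j)×O(n-j))`: for a function `f` on
`Gr_{i,n}` (a right `S(O(i)×O(n-i))`-invariant function on `SO(n)`) this is exactly the
Radon transform `R_{i,j} f`, a function on `Gr_{j,n}`. -/
def radonT {n : ℕ} (j : ℕ) (f : G n → ℝ) : G n → ℝ :=
  fun η => ∫ k, f (η * k) ∂subHaar (blockSub n j)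

/-- The cosine transform `C_i` on functions on the Grassmannian `Gr_{i,n}`. -/
def cosT {n : ℕ} (i : ℕ) (f : G n → ℝ) : G n → ℝ :=
  fun η => ∫ θ, cosAng i η θ * f θ ∂haarG n

/-- The cosine transform `C_i` of a signed measure on `Gr_{i,n}`, which is a (density)
function on `Gr_{i,n}`. -/
def cosTSM {n : ℕ} (i : ℕ) (μ : SignedMeasure (G n)) : G n → ℝ :=
  fun η => sInt μ (cosAng i η)

/-- The spherical cosine transform `(C_{n-1} f)(u) = ∫_{S^{n-1}} |u·v| f(v) dv` (with the
normalized probability measure on the sphere). -/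
def sphCosT {n : ℕ} (f : En n → ℝ) : En n → ℝ :=
  fun u => ∫ θ, |⟪u, rv θ (ebar n)⟫| * f (rv θ (ebar n)) ∂haarG n

/-- The convolution `f ∗ μ` of a function on `SO(n)` with a signed measure on `SO(n)`:
`(f ∗ μ)(η) = ∫ f(η θ⁻¹) dμ(θ)`. -/
def convFSM {n : ℕ} (f : G n → ℝ) (μ : SignedMeasure (G n)) : G n → ℝ :=
  fun η => sInt μ fun θ => f (η * θ⁻¹)

/-- The spherical convolution of (an integral against the area measure encoded by) a
function `f` on the sphere with the zonal function with profile `z : [-1,1] → ℝ`: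
`(f ∗ z̆)(u) = ∫_{S^{n-1}} f(v) z(⟨v,u⟩) dv`. -/
def sphConvZonal {n : ℕ} (f : En n → ℝ) (z : ℝ → ℝ) : En n → ℝ :=
  fun u => ∫ θ, f (rv θ (ebar n)) * z ⟪rv θ (ebar n), u⟫ ∂haarG n

/-! ### Smooth translation invariant valuations -/

/-- Interpret a plain function as a bounded continuous function (junk value `0` if it is not
continuous and bounded). -/
def toBCF {X : Type*} [TopologicalSpace X] (f : X → ℝ) : BoundedContinuousFunction X ℝ := by
  classical
  exact if h : Continuous f ∧ ∃ C, ∀ x y, dist (f x) (f y) ≤ C then ⟨⟨f, h.1⟩, h.2⟩ else 0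

/-- A real valued valuation `φ` on convex bodies is smooth (in the sense of Alesker) if the
map `GL(n) → Val`, `A ↦ φ ∘ A⁻¹`, is infinitely differentiable.  Here `GL(n)` is realized
as the open set of invertible continuous linear maps of `ℝⁿ` and the Banach space `Val` of
continuous translation invariant valuations (with norm `sup {|φ(K)| : K ⊆ B}`) is
isometrically realized inside the bounded continuous functions on
`{K : convex body // K ⊆ B}`. -/
def IsSmoothVal {n : ℕ} (φ : ConvexBody (En n) → ℝ) : Prop :=
  ContDiffOn ℝ (⊤ : ℕ∞)
    (fun T : En n →L[ℝ] En n =>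
      toBCF fun K : {K : ConvexBody (En n) // (K : Set (En n)) ⊆ Metric.closedBall 0 1} =>
        φ (cbMapL (Ring.inverse T) K.1))
    {T : En n →L[ℝ] En n | IsUnit T}

/-- A Minkowski valuation is smooth if its associated real valued valuation is smooth. -/
def IsSmoothMV {n : ℕ} (Φ : ConvexBody (En n) → ConvexBody (En n)) : Prop :=
  IsSmoothVal (assocVal Φ)

/-! ### Generating functions, the derivation operator `Λ` and the integration operator `𝔏` -/

/-- A zonal function `ğ` on the sphere is a generating function for the Minkowski valuation
`Φ` of degree `j` if `h(ΦK, ·) = S_j(K, ·) ∗ ğ`, i.e.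
`h(ΦK, u) = ∫_{S^{n-1}} g(⟨u,v⟩) dS_j(K, v)` where `g` is the profile of `ğ`. -/
def IsGenFun {n : ℕ} (j : ℕ) (Φ : ConvexBody (En n) → ConvexBody (En n))
    (g : En n → ℝ) : Prop :=
  Zonal g ∧ ∀ K, ∀ u ∈ sph n,
    suppFn (Φ K) u = areaInt j K fun v => g (pointAt n ⟪u, v⟫)

/-- `Ψ = Λ Φ` is the derivation of the Minkowski valuation `Φ`:
`h(ΨK, u) = (d/dt)|_{t=0⁺} h(Φ(K + tB), u)`. -/
def IsDerOf {n : ℕ} (Φ Ψ : ConvexBody (En n) → ConvexBody (En n)) : Prop :=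
  ∀ K u, suppFn (Ψ K) u =
    derivWithin (fun t => suppFn (Φ (K + ballBody n t)) u) (Ici (0 : ℝ)) 0

/-- The support function `h(Φ(K ∩ s), u)` of the image of the section of `K` by a (convex,
closed) set `s`, with the convention that the value is `0` if the section is empty. -/
def capSupp {n : ℕ} (Φ : ConvexBody (En n) → ConvexBody (En n)) (K : ConvexBody (En n))
    (s : Set (En n)) (u : En n) : ℝ := by
  classical
  exact if h : ((K : Set (En n)) ∩ s).Nonempty ∧ Convex ℝ s ∧ IsClosed s then
    suppFn (Φ ⟨(K : Set (En n)) ∩ s, K.convex.inter h.2.1,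
      K.isCompact.inter_right h.2.2, h.1⟩) u
  else 0

/-- The (affine) hyperplane `{x : ⟨w, x⟩ = t}`. -/
def hyperplane {n : ℕ} (w : En n) (t : ℝ) : Set (En n) := {x | ⟪w, x⟫ = t}

/-- `Ψ = 𝔏 Φ` is the image of the Minkowski valuation `Φ` under the integration operator:
`h(ΨK, u) = ∫_{AGr_{n-1,n}} h(Φ(K ∩ E), u) dσ_{n-1}(E)`, where hyperplanes are parametrized
by `(θ, t) ↦ {x : ⟨θē, x⟩ = t}` (each hyperplane arising twice) and the invariant measure
`σ_{n-1}` is normalized so that hyperplanes meeting the unit ball have measure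
`n κ_n / κ_{n-1}`. -/
def IsIntOf {n : ℕ} (Φ Ψ : ConvexBody (En n) → ConvexBody (En n)) : Prop :=
  ∀ K u, suppFn (Ψ K) u =
    ((n : ℝ) * kappa n / (2 * kappa ((n : ℝ) - 1))) *
      ∫ θ, (∫ t : ℝ, capSupp Φ K (hyperplane (rv θ (ebar n)) t) u) ∂haarG n

/-- The Steiner point `s(K) = n ∫_{S^{n-1}} h(K,u) u dσ(u)` of a convex body (`σ` the
rotation invariant probability measure on the sphere). -/
def steinerPt {n : ℕ} (K : ConvexBody (En n)) : En n :=
  (n : ℝ) • ∫ θ, suppFn K (rv θ (ebar n)) • rv θ (ebar n) ∂haarG n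

/-- `z` is the profile of the Berg function `ζ_j` of dimension `j`: the zonal function with
profile `z` is orthogonal to linear functions and satisfies Berg's identity
`h(K - s(K), ·) = S_1(K, ·) ∗ ζ̆_j` for all convex bodies `K` in `ℝʲ`. -/
def IsBergProfile (j : ℕ) (z : ℝ → ℝ) : Prop :=
  ContDiffOn ℝ (⊤ : ℕ∞) z (Ioo (-1 : ℝ) 1) ∧
    OrthLin (fun v : En j => z ⟪ebar j, v⟫) ∧
    ∀ K : ConvexBody (En j), ∀ u ∈ sph j,
      suppFn K u - ⟪steinerPt K, u⟫ = areaInt 1 K fun v => z ⟪u, v⟫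

/-- The affine plane `θ·(Ē_{n-k} + y)` of codimension `k` (dimension `n - k`), where the
translation vector `y` is given by its `k` coordinates in `Ē_{n-k}^⊥`.  As `(θ, y)` range
over `SO(n) × ℝᵏ` these planes run through the affine Grassmannian `AGr_{n-k,n}`, and the
rigid motion invariant measure on `AGr_{n-k,n}`, normalized so that the planes meeting the
unit ball have measure `κ_k`, is the push-forward of `haarG n ⊗ (Lebesgue on ℝᵏ)`. -/
def aPlane {n : ℕ} (k : ℕ) (θ : G n) (y : Fin k → ℝ) : Set (En n) :=
  (fun x => rv θ (x + (WithLp.equiv 2 (Fin n → ℝ)).symm fun j : Fin n =>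
    if h : n - k ≤ (j : ℕ) ∧ (j : ℕ) - (n - k) < k then y ⟨(j : ℕ) - (n - k), h.2⟩ else 0)) ''
    eiSet n (n - k)


/-- Left translation of complex valued functions on `SO(n)`. -/
def lT {n : ℕ} (ϑ : G n) (f : G n → ℂ) : G n → ℂ := fun η => f (ϑ⁻¹ * η)

/-- The reflection `f̂(θ) = f(θ⁻¹)`. -/
def hatC {n : ℕ} (f : G n → ℂ) : G n → ℂ := fun θ => f θ⁻¹

/-- A subspace of functions on `SO(n)` invariant under all left translations. -/
def IsInvSub {n : ℕ} (Γ : Submodule ℂ (G n → ℂ)) : Prop :=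
  ∀ ϑ : G n, ∀ f ∈ Γ, lT ϑ f ∈ Γ

/-- An irreducible (left) `SO(n)`-subrepresentation. -/
def IsIrred {n : ℕ} (Γ : Submodule ℂ (G n → ℂ)) : Prop :=
  IsInvSub Γ ∧ Γ ≠ ⊥ ∧ ∀ Γ' : Submodule ℂ (G n → ℂ), Γ' ≤ Γ → IsInvSub Γ' → Γ' = ⊥ ∨ Γ' = Γ

/-- Right invariance under a subgroup; right `H`-invariant functions on `SO(n)` are the
functions on the homogeneous space `SO(n)/H`. -/
def RightInv {n : ℕ} (H : Subgroup (G n)) (f : G n → ℂ) : Prop :=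
  ∀ h ∈ H, ∀ θ, f (θ * h) = f θ

/-- Invariance under left translation by elements of a subgroup. -/
def LeftInv {n : ℕ} (H : Subgroup (G n)) (f : G n → ℂ) : Prop :=
  ∀ h ∈ H, lT h f = f

/-- The representation `Γ` is real: it carries a non-degenerate symmetric invariant
bilinear form. -/
def IsRealRep {n : ℕ} (Γ : Submodule ℂ (G n → ℂ)) : Prop :=
  ∃ B : (G n → ℂ) →ₗ[ℂ] (G n → ℂ) →ₗ[ℂ] ℂ,
    (∀ f g, f ∈ Γ → g ∈ Γ → B f g = B g f) ∧
    (∀ ϑ : G n, ∀ f g, f ∈ Γ → g ∈ Γ → B (lT ϑ f) (lT ϑ g) = B f g) ∧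
    (∀ f ∈ Γ, f ≠ 0 → ∃ g ∈ Γ, B f g ≠ 0)

/-- `T` restricts to an `SO(n)`-equivariant linear isomorphism from `Γ₁` onto `Γ₂`. -/
def EquivIso {n : ℕ} (Γ₁ Γ₂ : Submodule ℂ (G n → ℂ)) : Prop :=
  ∃ T : (G n → ℂ) →ₗ[ℂ] (G n → ℂ),
    Submodule.map T Γ₁ = Γ₂ ∧ (∀ f ∈ Γ₁, T f = 0 → f = 0) ∧
    ∀ ϑ : G n, ∀ f ∈ Γ₁, T (lT ϑ f) = lT ϑ (T f)

/-- `SO(n)/H` is a Riemannian symmetric space: `H` is pinched between the fixed point group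
of a continuous involutive automorphism `σ` of `SO(n)` and its identity component. -/
def IsSymmetricPair {n : ℕ} (H : Subgroup (G n)) : Prop :=
  ∃ σ : G n ≃* G n, Continuous σ ∧ (∀ θ, σ (σ θ) = θ) ∧
    (H : Set (G n)) ⊆ {θ | σ θ = θ} ∧
    connectedComponentIn {θ | σ θ = θ} (1 : G n) ⊆ (H : Set (G n))

theorem lT_lT {n : ℕ} (a b : G n) (f : G n → ℂ) : lT a (lT b f) = lT (a * b) f := by
  funext x
  simp [lT, _root_.mul_inv_rev, mul_assoc]

theorem lT_one {n : ℕ} (f : G n → ℂ) : lT (1 : G n) f = f := by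
  funext x
  simp [lT]

/-- Left translation as a linear map. -/
def lTL {n : ℕ} (ϑ : G n) : (G n → ℂ) →ₗ[ℂ] (G n → ℂ) where
  toFun := lT ϑ
  map_add' := fun _ _ => rfl
  map_smul' := fun _ _ => rfl

/-- **Lemma 3.2.** Let `H₁, H₂` be closed subgroups of `SO(n)` with `SO(n)/H₁` and
`SO(n)/H₂` Riemannian symmetric.  If `f` lies in an irreducible subrepresentation `Γ` of
`L²(SO(n)/H₁)` (realized as a finite dimensional invariant space of continuous right
`H₁`-invariant functions), `f` is `H₂` invariant and `Γ` is real, then `f̂` is `H₁`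
invariant, right `H₂`-invariant (i.e. lies in `L²(SO(n)/H₂)`), and (unless `f = 0`) lies in
an irreducible subrepresentation of `L²(SO(n)/H₂)` isomorphic to `Γ` — by multiplicity
freeness, in the summand `Γ^{(2)}_λ` with the same highest weight `λ`. -/
theorem hat_of_invariant_function_in_real_irreducible
    (n : ℕ) (hn : 3 ≤ n) (H₁ H₂ : Subgroup (G n))
    (hH₁ : IsClosed (H₁ : Set (G n))) (hH₂ : IsClosed (H₂ : Set (G n)))
    (hs₁ : IsSymmetricPair H₁) (hs₂ : IsSymmetricPair H₂)
    (Γ : Submodule ℂ (G n → ℂ)) (hΓfd : FiniteDimensional ℂ Γ)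
    (hΓc : ∀ f ∈ Γ, Continuous f) (hΓH₁ : ∀ f ∈ Γ, RightInv H₁ f)
    (hΓirr : IsIrred Γ) (hΓreal : IsRealRep Γ)
    (f : G n → ℂ) (hf : f ∈ Γ) (hfH₂ : LeftInv H₂ f) :
    RightInv H₂ (hatC f) ∧ LeftInv H₁ (hatC f) ∧
      (f = 0 ∨ ∃ Γ₂ : Submodule ℂ (G n → ℂ), IsIrred Γ₂ ∧
        (∀ g ∈ Γ₂, RightInv H₂ g) ∧ hatC f ∈ Γ₂ ∧ EquivIso Γ Γ₂) := by
  obtain ⟨hΓinv, hΓne, hΓmin⟩ := hΓirr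
  refine ⟨?_, ?_, ?_⟩
  · -- `f̂` is right `H₂`-invariant
    intro h hh θ
    have h1 := congrFun (hfH₂ h hh) θ⁻¹
    simpa [hatC, lT, _root_.mul_inv_rev] using h1
  · -- `f̂` is `H₁`-invariant
    intro h hh
    funext η
    have h1 := hΓH₁ f hf h hh η⁻¹
    simpa [hatC, lT, _root_.mul_inv_rev] using h1
  · by_cases hf0 : f = 0
    · exact Or.inl hf0
    refine Or.inr ?_
    obtain ⟨B, hBsymm, hBinv, hBnd⟩ := hΓreal
    -- The span of the left translates of `f` is all of `Γ`.
    set Wsp : Submodule ℂ (G n → ℂ) :=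
      Submodule.span ℂ (Set.range fun ϑ : G n => lT ϑ f) with hWsp
    have hWle : Wsp ≤ Γ := by
      rw [hWsp, Submodule.span_le]
      rintro _ ⟨ϑ, rfl⟩
      exact hΓinv ϑ f hf
    have hWinv : IsInvSub Wsp := by
      intro ϑ g hg
      have hsub : Wsp ≤ Submodule.comap (lTL ϑ) Wsp := by
        rw [hWsp, Submodule.span_le]
        rintro _ ⟨η, rfl⟩
        simp only [SetLike.mem_coe, Submodule.mem_comap]
        show lT ϑ (lT η f) ∈ _
        rw [lT_lT]
        exact Submodule.subset_span ⟨ϑ * η, rfl⟩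
      exact hsub hg
    have hfW : f ∈ Wsp := lT_one f ▸ Submodule.subset_span ⟨1, rfl⟩
    have hWΓ : Wsp = Γ := by
      rcases hΓmin Wsp hWle hWinv with h | h
      · exact absurd (by rw [h] at hfW; simpa using hfW) hf0
      · exact h
    -- `B` restricted to `Γ`, as a map into the dual.
    let Br : Γ →ₗ[ℂ] Module.Dual ℂ Γ :=
      { toFun := fun x =>
          { toFun := fun y => B x.1 y.1
            map_add' := fun a b => by simp
            map_smul' := fun c a => by simp }
        map_add' := fun a b => by ext y; simp
        map_smul' := fun c a => by ext y; simp }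
    have hBrinj : Function.Injective Br := by
      refine (injective_iff_map_eq_zero _).mpr ?_
      intro x hx
      by_contra hx0
      obtain ⟨g, hg, hBg⟩ := hBnd x.1 x.2 (fun h => hx0 (Subtype.ext h))
      exact hBg (LinearMap.congr_fun hx ⟨g, hg⟩)
    have hBrsurj : Function.Surjective Br :=
      (LinearMap.injective_iff_surjective_of_finrank_eq_finrank
        (Subspace.dual_finrank_eq).symm).mp hBrinj
    -- `f₀` represents evaluation at the identity.
    obtain ⟨f₀, hf₀⟩ := hBrsurj
      { toFun := fun y : Γ => y.1 1
        map_add' := fun a b => by simp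
        map_smul' := fun c a => by simp }
    have hf₀eval : ∀ g ∈ Γ, B f₀.1 g = g 1 := by
      intro g hg
      exact LinearMap.congr_fun hf₀ ⟨g, hg⟩
    -- The intertwining map `T`.
    let T : (G n → ℂ) →ₗ[ℂ] (G n → ℂ) :=
      { toFun := fun g => fun η => B g (lT η f)
        map_add' := fun a b => by funext η; simp
        map_smul' := fun c a => by funext η; simp }
    have hTapp : ∀ g η, T g η = B g (lT η f) := fun _ _ => rfl
    -- Equivariance of `T` on `Γ`.
    have hTeq : ∀ ϑ : G n, ∀ g ∈ Γ, T (lT ϑ g) = lT ϑ (T g) := by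
      intro ϑ g hg
      funext η
      have h1 : lT η f = lT ϑ (lT (ϑ⁻¹ * η) f) := by
        rw [lT_lT, mul_inv_cancel_left]
      show B (lT ϑ g) (lT η f) = T g (ϑ⁻¹ * η)
      rw [h1, hBinv ϑ g (lT (ϑ⁻¹ * η) f) hg (hΓinv (ϑ⁻¹ * η) f hf)]
      rfl
    -- `T f₀ = f̂`.
    have hTf₀ : T f₀.1 = hatC f := by
      funext η
      rw [hTapp, hf₀eval (lT η f) (hΓinv η f hf)]
      show f (η⁻¹ * 1) = f η⁻¹
      rw [mul_one]
    -- Injectivity of `T` on `Γ`.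
    have hTinj : ∀ g ∈ Γ, T g = 0 → g = 0 := by
      intro g hg hTg
      by_contra hg0
      obtain ⟨h, hh, hBh⟩ := hBnd g hg hg0
      apply hBh
      have hker : Wsp ≤ LinearMap.ker (B g) := by
        rw [hWsp, Submodule.span_le]
        rintro _ ⟨η, rfl⟩
        simpa [LinearMap.mem_ker, hTapp] using congrFun hTg η
      have : h ∈ LinearMap.ker (B g) := hker (hWΓ.symm ▸ hh)
      simpa [LinearMap.mem_ker] using this
    refine ⟨Submodule.map T Γ, ⟨?_, ?_, ?_⟩, ?_, ?_, ⟨T, rfl, hTinj, hTeq⟩⟩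
    · -- invariance of `Γ₂`
      rintro ϑ _ ⟨g, hg, rfl⟩
      exact ⟨lT ϑ g, hΓinv ϑ g hg, hTeq ϑ g hg⟩
    · -- `Γ₂ ≠ ⊥`
      intro hbot
      apply hf0
      have hmem : T f₀.1 ∈ Submodule.map T Γ := ⟨f₀.1, f₀.2, rfl⟩
      rw [hbot, Submodule.mem_bot, hTf₀] at hmem
      funext θ
      have := congrFun hmem θ⁻¹
      simpa [hatC] using this
    · -- minimality
      intro Γ' hle hinv'
      have hinterinv : IsInvSub (Γ ⊓ Submodule.comap T Γ') := by
        rintro ϑ g ⟨hg1, hg2⟩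
        refine ⟨hΓinv ϑ g hg1, Submodule.mem_comap.mpr ?_⟩
        rw [hTeq ϑ g hg1]
        exact hinv' ϑ (T g) hg2
      rcases hΓmin (Γ ⊓ Submodule.comap T Γ') inf_le_left hinterinv with h | h
      · left
        rw [eq_bot_iff]
        rintro g' hg'
        obtain ⟨g, hg, rfl⟩ := hle hg'
        have : g ∈ Γ ⊓ Submodule.comap T Γ' := ⟨hg, hg'⟩
        rw [h, Submodule.mem_bot] at this
        simp [this]
      · right
        refine le_antisymm hle ?_
        rintro _ ⟨g, hg, rfl⟩
        have : g ∈ Γ ⊓ Submodule.comap T Γ' := h.symm ▸ hg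
        exact this.2
    · -- every element of `Γ₂` is right `H₂`-invariant
      rintro _ ⟨g, hg, rfl⟩ h hh θ
      show B g (lT (θ * h) f) = B g (lT θ f)
      rw [← lT_lT, hfH₂ h hh]
    · -- `f̂ ∈ Γ₂`
      exact ⟨f₀.1, f₀.2, hTf₀⟩

end MinkVal
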